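/- arXiv:1403.1502 — 2 statements merged into one kernel-verified Lean document; each statement's English description precedes it below -/
import Mathlib

section
/- Let 𝐰 = (s₁,s₂,…) be an infinite reduced word of a Lorentzian Coxeter system (W,S)_B and let γ̄(𝐰) denote the unique accumulation point of ℙ(inv(𝐰)). Then γ̄(𝐰) arises as a limit direction through the sequence of prefixes: there exists a base point x̄₀ ∈ ℙV such that the sequence (w_k·x̄₀)_{k∈ℕ}, where w_k = s₁s₂⋯s_k, is injective and converges to γ̄(𝐰). -/
open Projectivization Filter Topology TensorProduct
open scoped LinearAlgebra.Projectivization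

noncomputable section

/-- The representation space `V`: functions `S → ℝ`, with the simple roots as standard basis. -/
abbrev Vec (S : Type) : Type := S → ℝ

/-- The simple root associated to a generator `s ∈ S`. -/
def simpleRoot {S : Type} [DecidableEq S] (s : S) : Vec S := Pi.single s 1

/-- The symmetric bilinear form on `V` determined by the matrix `k`. -/
def Bform {S : Type} [Fintype S] (k : S → S → ℝ) (x y : Vec S) : ℝ :=
  ∑ s : S, ∑ t : S, x s * k s t * y t

instance {S : Type} : TopologicalSpace (ℙ ℝ (Vec S)) :=
  inferInstanceAs (TopologicalSpace (Quotient (projectivizationSetoid ℝ (Vec S))))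

/-- `p` is an accumulation point of `Y`: every neighbourhood of `p` contains a point of `Y`
different from `p`. -/
def IsAccumPt {X : Type*} [TopologicalSpace X] (p : X) (Y : Set X) : Prop :=
  ∀ U ∈ nhds p, ∃ y ∈ Y, y ∈ U ∧ y ≠ p

/-- A Lorentzian Coxeter system `(W,S)_B`: a Coxeter system `(W,S)` together with a symmetric
matrix `k` (with entries `-cos (π / m s t)` for `m s t` finite and arbitrary entries `≤ -1`
for `m s t = ∞`, encoded by `M s t = 0`), whose bilinear form has signature `(n-1, 1)`,
and the faithful geometric representation `ρ` of `W` on `V`, sending each simple reflection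
to the `𝓑`-reflection in the corresponding simple root, and preserving `𝓑`. -/
structure LorentzianCoxeterSystem (S W : Type) [Fintype S] [DecidableEq S] [Group W] where
  M : CoxeterMatrix S
  cs : CoxeterSystem M W
  k : S → S → ℝ
  k_symm : ∀ s t, k s t = k t s
  k_fin : ∀ s t, M s t ≠ 0 → k s t = - Real.cos (Real.pi / (M s t : ℝ))
  k_inf : ∀ s t, M s t = 0 → k s t ≤ -1
  ρ : W →* (Vec S ≃ₗ[ℝ] Vec S)
  ρ_inj : Function.Injective ρ
  ρ_simple : ∀ (s : S) (x : Vec S),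
    ρ (cs.simple s) x =
      x - (2 * Bform k x (simpleRoot s) / Bform k (simpleRoot s) (simpleRoot s)) • simpleRoot s
  ρ_preserves : ∀ (w : W) (x y : Vec S), Bform k (ρ w x) (ρ w y) = Bform k x y
  lorentzian : ∃ b : Module.Basis (Fin (Fintype.card S)) ℝ (Vec S), ∀ i j,
    Bform k (b i) (b j) =
      if i = j then (if (i : ℕ) + 1 = Fintype.card S then -1 else 1) else 0

namespace LorentzianCoxeterSystem

variable {S W : Type} [Fintype S] [DecidableEq S] [Group W]
variable (G : LorentzianCoxeterSystem S W)

/-- The root system `Φ = W(Δ)`. -/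
def rootSet : Set (Vec S) := {v | ∃ (w : W) (s : S), v = G.ρ w (simpleRoot s)}

/-- The positive roots `Φ⁺ = Φ ∩ cone(Δ)`. -/
def posRootSet : Set (Vec S) := {v | v ∈ G.rootSet ∧ ∀ s, 0 ≤ v s}

/-- The set of projective roots `ℙΦ`. -/
def projRootSet : Set (ℙ ℝ (Vec S)) :=
  {p | ∃ (v : Vec S) (hv : v ≠ 0), v ∈ G.rootSet ∧ p = Projectivization.mk ℝ v hv}

/-- The set of limit roots `E_Φ`: accumulation points of the projective roots. -/
def limitRoots : Set (ℙ ℝ (Vec S)) := {p | IsAccumPt p G.projRootSet}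

/-- The projective action of `w ∈ W` on `ℙ V`. -/
def pact (w : W) (p : ℙ ℝ (Vec S)) : ℙ ℝ (Vec S) :=
  Projectivization.map ((G.ρ w : Vec S ≃ₗ[ℝ] Vec S) : Vec S →ₗ[ℝ] Vec S) (G.ρ w).injective p

/-- The set of limit directions `E_V`. -/
def limitDirections : Set (ℙ ℝ (Vec S)) :=
  {p | ∃ (p₀ : ℙ ℝ (Vec S)) (w : ℕ → W),
    Function.Injective (fun i => G.pact (w i) p₀) ∧
    Tendsto (fun i => G.pact (w i) p₀) atTop (nhds p)}

/-- The set `𝓛_hyp`: union over pairs of positive roots `α, β` with `𝓑(α,β) < -1` of the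
projectivization of the codimension-2 subspace orthogonal to both. -/
def Lhyp : Set (ℙ ℝ (Vec S)) :=
  {p | ∃ a ∈ G.posRootSet, ∃ b ∈ G.posRootSet, Bform G.k a b < -1 ∧
    ∃ (z : Vec S) (hz : z ≠ 0), Bform G.k z a = 0 ∧ Bform G.k z b = 0 ∧
      p = Projectivization.mk ℝ z hz}

/-- The complexification of `ρ(w)`, an endomorphism of `ℂ ⊗[ℝ] V`. -/
def endC (w : W) : Module.End ℂ (ℂ ⊗[ℝ] Vec S) :=
  LinearMap.baseChange ℂ ((G.ρ w : Vec S ≃ₗ[ℝ] Vec S) : Vec S →ₗ[ℝ] Vec S)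

/-- All complex eigenvalues of the complexification of `ρ(w)` have absolute value 1. -/
def AllEigenvaluesUnimodular (w : W) : Prop :=
  ∀ μ : ℂ, Module.End.HasEigenvalue (G.endC w) μ → ‖μ‖ = 1

/-- The complexification of `ρ(w)` is diagonalizable. -/
def DiagonalizableC (w : W) : Prop :=
  (⨆ μ : ℂ, Module.End.eigenspace (G.endC w) μ) = ⊤

/-- The unimodular subspace `U_w ⊆ V`: vectors whose image in `ℂ ⊗[ℝ] V` lies in the sum of
the eigenspaces of the complexification of `ρ(w)` for eigenvalues of absolute value 1. -/
def USet (w : W) : Set (Vec S) :=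
  {v | ((1 : ℂ) ⊗ₜ[ℝ] v : ℂ ⊗[ℝ] Vec S) ∈
    ⨆ (μ : ℂ) (_ : ‖μ‖ = 1), Module.End.eigenspace (G.endC w) μ}

/-- The projective unimodular subspace `ℙ U_w`. -/
def projU (w : W) : Set (ℙ ℝ (Vec S)) :=
  {p | ∃ (v : Vec S) (hv : v ≠ 0), v ∈ G.USet w ∧ p = Projectivization.mk ℝ v hv}

/-- The product `w_n = s₁ s₂ ⋯ s_n` of the first `n` letters of the word `ω`. -/
def prefixProd (ω : ℕ → S) (n : ℕ) : W :=
  G.cs.wordProd (List.ofFn (fun i : Fin n => ω i))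

/-- `ω` is an infinite reduced word: each prefix is reduced. -/
def IsInfiniteReducedWord (ω : ℕ → S) : Prop :=
  ∀ n, G.cs.length (G.prefixProd ω n) = n

/-- The inversion set `inv(𝐰) = {w_{k-1}(α_{s_k}) : k ≥ 1}` of an infinite word. -/
def invSet (ω : ℕ → S) : Set (Vec S) :=
  {v | ∃ n : ℕ, v = G.ρ (G.prefixProd ω n) (simpleRoot (ω n))}

/-- The projective inversion set `ℙ(inv(𝐰))`. -/
def projInvSet (ω : ℕ → S) : Set (ℙ ℝ (Vec S)) :=
  {p | ∃ (v : Vec S) (hv : v ≠ 0), v ∈ G.invSet ω ∧ p = Projectivization.mk ℝ v hv}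

/-- A subset `A` of the positive roots is closed if any positive root which is a nonnegative
combination of two elements of `A` is in `A`. -/
def IsClosedRootSubset (A : Set (Vec S)) : Prop :=
  ∀ a ∈ A, ∀ b ∈ A, ∀ x y : ℝ, 0 ≤ x → 0 ≤ y →
    x • a + y • b ∈ G.posRootSet → x • a + y • b ∈ A

end LorentzianCoxeterSystem

/-!
Fix `x₀` with `𝓑(x₀, α_t) = -1` for all `t` (the form is nondegenerate) and put `y_k = w_k(x₀)`,
`β_k = w_k(α_{s_{k+1}})`, so that `y_{k+1} = y_k + 2 β_k`. Positivity of roots gives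
`𝓑(y_k, β_j) < 0` for `k ≤ j` and `𝓑(y_k, β_j) > 0` for `j < k`, and these signs separate the
points `[y_k]`. Both `‖y_k‖` and `‖β_k‖` tend to infinity; for the roots, two nearby `β_m, β_n`
would make the nontrivial element `r_m r_n`, product of their reflections, move no simple root
much. So every subsequential limit of `y_k / ‖y_k‖` or of `β_n / ‖β_n‖` is an isotropic vector of
the nonnegative cone, and by the sign pattern a limit of the first kind is `𝓑`-orthogonal to one
of the second kind. In signature `(n-1, 1)` this forces all these limits to coincide: `[y_k]` and
`[β_n]` converge to the same point, which is therefore the accumulation point of the `[β_n]`.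
-/

lemma eq_of_isAccumPt_of_tendsto {X : Type*} [TopologicalSpace X] [T2Space X] {Y : Set X}
    {u : ℕ → X} {p q : X} (hp : IsAccumPt p Y) (hY : Y ⊆ Set.range u)
    (hu : Tendsto u atTop (𝓝 q)) : p = q := by
  by_contra hpq
  obtain ⟨U, V, hU, hV, hpU, hqV, hUV⟩ := t2_separation hpq
  obtain ⟨N, hN⟩ := eventually_atTop.mp (hu.eventually (hV.mem_nhds hqV))
  have hacc : AccPt p (𝓟 (U ∩ Y)) :=
    (accPt_iff_nhds.mpr fun O hO => by
      obtain ⟨y, hyY, hyO, hyp⟩ := hp O hO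
      exact ⟨y, ⟨hyO, hyY⟩, hyp⟩).nhds_inter (hU.mem_nhds hpU)
  refine Set.Infinite.of_accPt hacc ((Set.finite_lt_nat N).image u |>.subset ?_)
  rintro _ ⟨hyU, hyY⟩
  obtain ⟨n, rfl⟩ := hY hyY
  exact ⟨n, lt_of_not_ge fun hn => Set.disjoint_left.mp hUV hyU (hN n hn), rfl⟩

lemma exists_tendsto_of_subseq_limits_eq {X : Type*} [TopologicalSpace X]
    [FirstCountableTopology X] {K : Set X} (hK : IsCompact K) {u v : ℕ → X} (hu : ∀ n, u n ∈ K)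
    (hv : ∀ n, v n ∈ K)
    (h : ∀ a b (φ ψ : ℕ → ℕ), StrictMono φ → StrictMono ψ → Tendsto (u ∘ φ) atTop (𝓝 a) →
      Tendsto (v ∘ ψ) atTop (𝓝 b) → a = b) :
    ∃ ζ, Tendsto u atTop (𝓝 ζ) ∧ Tendsto v atTop (𝓝 ζ) := by
  obtain ⟨a, -, φ, hφ, ha⟩ := hK.tendsto_subseq hu
  obtain ⟨b, -, ψ, hψ, hb⟩ := hK.tendsto_subseq hv
  refine ⟨a, hK.tendsto_nhds_of_unique_mapClusterPt (.of_forall hu) fun x _ hx => ?_,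
    hK.tendsto_nhds_of_unique_mapClusterPt (.of_forall hv) fun y _ hy => ?_⟩
  · obtain ⟨φ', hφ', hx'⟩ := hx.tendsto_subseq
    exact (h x b φ' ψ hφ' hψ hx' hb).trans (h a b φ ψ hφ hψ ha hb).symm
  · obtain ⟨ψ', hψ', hy'⟩ := hy.tendsto_subseq
    exact (h a y φ ψ' hφ hψ' ha hy').symm

lemma norm_eq_one_of_tendsto_inv_norm_smul {E ι : Type*} [NormedAddCommGroup E]
    [NormedSpace ℝ E] {l : Filter ι} [l.NeBot] {u : ι → E} {a : E} (hu0 : ∀ n, u n ≠ 0)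
    (hu : Tendsto (fun n => ‖u n‖⁻¹ • u n) l (𝓝 a)) : ‖a‖ = 1 :=
  tendsto_nhds_unique hu.norm (tendsto_const_nhds.congr fun n => (norm_smul_inv_norm (hu0 n)).symm)

/-- `f y • x - f x • y` lies in `ker f` and is isotropic. -/
lemma LinearMap.BilinForm.smul_eq_smul_of_isOrtho {R V : Type*} [CommRing R] [AddCommGroup V]
    [Module R V] (B : LinearMap.BilinForm R V) (f : V →ₗ[R] R)
    (hB : ∀ z, f z = 0 → B z z = 0 → z = 0) {x y : V} (hx : B x x = 0) (hy : B y y = 0)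
    (hxy : B x y = 0) (hyx : B y x = 0) : f y • x = f x • y := by
  refine sub_eq_zero.mp (hB _ ?_ ?_)
  · simp only [map_sub, map_smul, smul_eq_mul]
    ring
  · simp [hx, hy, hxy, hyx]

namespace Polynomial.Chebyshev

open Real

lemma U_eval_nonneg_of_one_le {c : ℝ} (hc : 1 ≤ c) {n : ℤ} (hn : -1 ≤ n) :
    0 ≤ (U ℝ n).eval c := by
  have key : ∀ m : ℕ,
      0 ≤ (U ℝ ((m : ℤ) - 1)).eval c ∧ (U ℝ ((m : ℤ) - 1)).eval c ≤ (U ℝ m).eval c := by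
    intro m
    induction m with
    | zero => simp
    | succ m ih =>
      push_cast
      rw [add_sub_cancel_right, U_add_one]
      simp only [eval_sub, eval_mul, eval_ofNat, eval_X]
      constructor <;> nlinarith
  obtain ⟨m, rfl⟩ : ∃ m : ℕ, n = (m : ℤ) - 1 := ⟨(n + 1).toNat, by omega⟩
  exact (key m).1

lemma U_eval_cos_pi_div_nonneg {m : ℕ} (hm : 2 ≤ m) {n : ℤ} (hn : -1 ≤ n) (hnm : n + 1 ≤ m) :
    0 ≤ (U ℝ n).eval (cos (π / m)) := by
  have hm0 : (0 : ℝ) < m := by positivity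
  have hsin : 0 < sin (π / m) :=
    sin_pos_of_pos_of_lt_pi (by positivity) (div_lt_self pi_pos (by exact_mod_cast hm))
  have hsin' : 0 ≤ sin ((n + 1) * (π / m)) := by
    apply sin_nonneg_of_nonneg_of_le_pi
    · have : (0 : ℝ) ≤ n + 1 := by exact_mod_cast (by omega : (0 : ℤ) ≤ n + 1)
      positivity
    · rw [mul_div_assoc', div_le_iff₀ hm0, mul_comm]
      exact mul_le_mul_of_nonneg_left (by exact_mod_cast hnm) pi_pos.le
  rw [← U_real_cos] at hsin'
  exact nonneg_of_mul_nonneg_left hsin' hsin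

end Polynomial.Chebyshev

namespace CoxeterSystem

variable {B W : Type*} [Group W] {M : CoxeterMatrix B} (cs : CoxeterSystem M W)

local prefix:100 "π" => cs.wordProd
local prefix:100 "ℓ" => cs.length

theorem eq_alternatingWord_of_isReduced {s t : B} {l : List B} (hl : cs.IsReduced l)
    (hst : ∀ a ∈ l, a = s ∨ a = t) (hs : ℓ (π l * cs.simple s) = l.length + 1) :
    l = alternatingWord s t l.length := by
  induction l using List.reverseRecOn generalizing s t with
  | nil => rfl
  | append_singleton l a ih =>
    have hπ : π (l ++ [a]) = π l * cs.simple a := by rw [wordProd_append, wordProd_singleton]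
    rcases hst a (by simp) with rfl | rfl
    · have := cs.length_wordProd_le l
      rw [hπ, simple_mul_simple_cancel_right] at hs
      simp only [List.length_append, List.length_cons, List.length_nil, zero_add] at hs
      omega
    · have hl' : cs.IsReduced l := by simpa using hl.take l.length
      have hst' : ∀ b ∈ l, b = a ∨ b = s := fun b hb => (hst b (by simp [hb])).symm
      have hs' : ℓ (π l * cs.simple a) = l.length + 1 := by rw [← hπ, hl.eq]; simp
      rw [List.length_append, List.length_singleton, alternatingWord_succ, List.concat_eq_append,
        ← ih hl' hst' hs']

theorem exists_eq_mul_wordProd_of_ascents (s t : B) (w : W) :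
    ∃ u l, w = u * π l ∧ (∀ a ∈ l, a = s ∨ a = t) ∧ ℓ u + l.length = ℓ w ∧
      ℓ (u * cs.simple s) = ℓ u + 1 ∧ ℓ (u * cs.simple t) = ℓ u + 1 := by
  induction hn : ℓ w using Nat.strong_induction_on generalizing w with
  | _ n ih =>
    by_cases hasc : ℓ (w * cs.simple s) = ℓ w + 1 ∧ ℓ (w * cs.simple t) = ℓ w + 1
    · exact ⟨w, [], by simp, by simp, by simp [hn], hasc⟩
    obtain ⟨a, ha, hdesc⟩ : ∃ a, (a = s ∨ a = t) ∧ ℓ (w * cs.simple a) + 1 = ℓ w := by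
      rcases cs.length_mul_simple w s with h | h
      · rcases cs.length_mul_simple w t with h' | h'
        · exact absurd ⟨h, h'⟩ hasc
        · exact ⟨t, Or.inr rfl, h'⟩
      · exact ⟨s, Or.inl rfl, h⟩
    obtain ⟨u, l, hw, hl, hlen, hus, hut⟩ := ih _ (by omega) (w * cs.simple a) rfl
    refine ⟨u, l ++ [a], ?_, ?_, ?_, hus, hut⟩
    · rw [wordProd_append, wordProd_singleton, ← mul_assoc, ← hw, simple_mul_simple_cancel_right]
    · simpa [or_imp, forall_and] using ⟨hl, ha⟩
    · simp only [List.length_append, List.length_singleton]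
      omega

theorem exists_eq_mul_alternatingWord {w : W} {s t : B} (hs : ℓ (w * cs.simple s) = ℓ w + 1)
    (ht : ℓ (w * cs.simple t) + 1 = ℓ w) :
    ∃ u j, w = u * π (alternatingWord s t j) ∧ ℓ u + j = ℓ w ∧ 0 < j ∧
      ℓ (u * cs.simple s) = ℓ u + 1 ∧ ℓ (u * cs.simple t) = ℓ u + 1 ∧
      cs.IsReduced (alternatingWord t s (j + 1)) := by
  obtain ⟨u, l, hwt, hl, hlen, hus, hut⟩ :=
    cs.exists_eq_mul_wordProd_of_ascents s t (w * cs.simple t)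
  have hw : w = u * π (l ++ [t]) := by
    rw [wordProd_append, wordProd_singleton, ← mul_assoc, ← hwt, simple_mul_simple_cancel_right]
  have hv_le := cs.length_wordProd_le (l ++ [t])
  have hw_le := cs.length_mul_le u (π (l ++ [t]))
  have hws_le := cs.length_mul_le u (π (l ++ [t]) * cs.simple s)
  have hvs_le := cs.length_mul_le (π (l ++ [t])) (cs.simple s)
  rw [← hw] at hw_le
  rw [← mul_assoc, ← hw, hs] at hws_le
  rw [length_simple] at hvs_le
  simp only [List.length_append, List.length_singleton] at hv_le
  have halt : l ++ [t] = alternatingWord s t (l.length + 1) := by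
    have := cs.eq_alternatingWord_of_isReduced (l := l ++ [t])
      (by unfold IsReduced; simp only [List.length_append, List.length_singleton]; omega)
      (fun a ha => by
        rcases List.mem_append.mp ha with h | h
        exacts [hl a h, Or.inr (List.mem_singleton.mp h)])
      (by simp only [List.length_append, List.length_singleton]; omega)
    simpa using this
  refine ⟨u, l.length + 1, halt ▸ hw, by omega, by omega, hus, hut, ?_⟩
  unfold IsReduced
  rw [alternatingWord_succ, ← halt, wordProd_concat, List.length_concat, List.length_append,
    List.length_singleton]
  omega

end CoxeterSystem

section ProjectiveSpace

variable {S : Type}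

lemma Projectivization.tendsto_mk_of_tendsto_smul {u : ℕ → Vec S} (hu : ∀ n, u n ≠ 0)
    {c : ℕ → ℝ} (hc : ∀ n, c n ≠ 0) {ζ : Vec S} (hζ : ζ ≠ 0)
    (h : Tendsto (fun n => c n • u n) atTop (𝓝 ζ)) :
    Tendsto (fun n => mk ℝ (u n) (hu n)) atTop (𝓝 (mk ℝ ζ hζ)) := by
  have hmk : ∀ n, mk ℝ (u n) (hu n) = mk ℝ (c n • u n) (smul_ne_zero (hc n) (hu n)) := fun n =>
    (mk_eq_mk_iff' ℝ _ _ _ _).mpr ⟨(c n)⁻¹, by rw [smul_smul, inv_mul_cancel₀ (hc n), one_smul]⟩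
  simp only [hmk]
  exact (continuous_quotient_mk'.tendsto _).comp (tendsto_subtype_rng.mpr h)

variable [Fintype S]

def lineProj (v x : Vec S) : Vec S := ((v ⬝ᵥ x) / (v ⬝ᵥ v)) • v

lemma dotProduct_self_ne_zero {v : Vec S} (hv : v ≠ 0) : v ⬝ᵥ v ≠ 0 :=
  dotProduct_self_eq_zero.not.mpr hv

lemma lineProj_self {v : Vec S} (hv : v ≠ 0) : lineProj v v = v := by
  rw [lineProj, div_self (dotProduct_self_ne_zero hv), one_smul]

lemma lineProj_smul (v : Vec S) {t : ℝ} (ht : t ≠ 0) : lineProj (t • v) = lineProj v := by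
  funext x
  simp only [lineProj, smul_dotProduct, dotProduct_smul, smul_eq_mul, smul_smul]
  congr 1
  field_simp

lemma continuous_lineProj : Continuous fun v : {v : Vec S // v ≠ 0} => lineProj v.1 :=
  continuous_pi fun _ => ((by fun_prop : Continuous fun v : {v : Vec S // v ≠ 0} => v.1 ⬝ᵥ _).div
    (by fun_prop) fun v => dotProduct_self_ne_zero v.2).smul (by fun_prop)

-- `[v] ↦ lineProj v` is a continuous injection into a Hausdorff space.
instance : T2Space (ℙ ℝ (Vec S)) := by
  let f : ℙ ℝ (Vec S) → Vec S → Vec S :=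
    Projectivization.lift (fun v => lineProj v.1) fun v w t h => by
      rw [h, lineProj_smul _ (by rintro rfl; simp only [ne_eq, zero_smul] at h; exact v.2 h)]
  refine T2Space.of_injective_continuous (f := f) ?_ (continuous_lineProj.quotient_lift _)
  intro p q hpq
  induction p using Projectivization.ind with | h v hv =>
  induction q using Projectivization.ind with | h w hw =>
  have h := congrFun hpq w
  simp only [f, Projectivization.lift_mk, lineProj_self hw] at h
  exact ((Projectivization.mk_eq_mk_iff' ℝ _ _ hw hv).mpr ⟨_, h⟩).symm

end ProjectiveSpace

section Coordinates

variable {S : Type} [Fintype S]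

lemma norm_le_sum_of_nonneg {v : Vec S} (hv : 0 ≤ v) : ‖v‖ ≤ ∑ t, v t :=
  (pi_norm_le_iff_of_nonneg (Finset.sum_nonneg fun t _ => hv t)).mpr fun s => by
    rw [Real.norm_eq_abs, abs_of_nonneg (hv s)]
    exact Finset.single_le_sum (fun t _ => hv t) (Finset.mem_univ s)

lemma sum_le_card_mul_norm (v : Vec S) : ∑ t, v t ≤ Fintype.card S * ‖v‖ := by
  simpa using Finset.sum_le_card_nsmul Finset.univ v ‖v‖ fun t _ =>
    (le_abs_self _).trans (norm_le_pi_norm v t)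

lemma sum_pos_of_nonneg {v : Vec S} (hv : 0 ≤ v) (hv0 : v ≠ 0) : 0 < ∑ t, v t :=
  (norm_pos_iff.mpr hv0).trans_le (norm_le_sum_of_nonneg hv)

end Coordinates

section BilinearForm

variable {S : Type} [Fintype S] {k : S → S → ℝ}

lemma Bform_zero_left (y : Vec S) : Bform k 0 y = 0 := by simp [Bform]

lemma Bform_comm (hk : ∀ s t, k s t = k t s) (x y : Vec S) : Bform k x y = Bform k y x := by
  unfold Bform
  rw [Finset.sum_comm]
  exact Finset.sum_congr rfl fun _ _ => Finset.sum_congr rfl fun _ _ => by rw [hk]; ring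

lemma continuous_Bform : Continuous fun p : Vec S × Vec S => Bform k p.1 p.2 := by
  unfold Bform
  fun_prop

lemma exists_pos_le_norm_of_Bform_self_eq_one :
    ∃ c > 0, ∀ v : Vec S, Bform k v v = 1 → c ≤ ‖v‖ := by
  have hcont : ContinuousAt (fun v : Vec S => Bform k v v) 0 :=
    (continuous_Bform.comp (continuous_id.prodMk continuous_id)).continuousAt
  obtain ⟨δ, hδ, hball⟩ := Metric.continuousAt_iff.mp hcont 1 one_pos
  refine ⟨δ, hδ, fun v hv => le_of_not_gt fun hlt => ?_⟩
  have := hball (by simpa using hlt)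
  simp [hv, Bform_zero_left] at this

variable (k) in
def Bform.reflect (u x : Vec S) : Vec S := x - (2 * Bform k x u) • u

lemma continuous_Bform_reflect : Continuous fun p : Vec S × Vec S => Bform.reflect k p.1 p.2 := by
  unfold Bform.reflect
  have := (continuous_Bform (k := k)).comp (continuous_snd.prodMk continuous_fst)
  fun_prop

variable [DecidableEq S]

variable (k) in
def bilin : LinearMap.BilinForm ℝ (Vec S) := Matrix.toLinearMap₂' ℝ (Matrix.of k)

lemma bilin_apply (x y : Vec S) : bilin k x y = Bform k x y := by
  simp only [bilin, Matrix.toLinearMap₂'_apply, Matrix.of_apply, smul_eq_mul, Bform]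
  exact Finset.sum_congr rfl fun _ _ => Finset.sum_congr rfl fun _ _ => by ring

lemma Bform_smul_left (c : ℝ) (x y : Vec S) : Bform k (c • x) y = c * Bform k x y := by
  simp only [← bilin_apply, map_smul, LinearMap.smul_apply, smul_eq_mul]

lemma Bform_smul_right (c : ℝ) (x y : Vec S) : Bform k x (c • y) = c * Bform k x y := by
  simp only [← bilin_apply, map_smul, smul_eq_mul]

lemma Bform_sub_left (x y z : Vec S) : Bform k (x - y) z = Bform k x z - Bform k y z := by
  simp only [← bilin_apply, map_sub, LinearMap.sub_apply]

lemma Bform.reflect_reflect {u : Vec S} (hu : Bform k u u = 1) (x : Vec S) :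
    Bform.reflect k u (Bform.reflect k u x) = x := by
  simp only [Bform.reflect, Bform_sub_left, Bform_smul_left, hu]
  module

section Normalize

variable {ι : Type*} {l : Filter ι} {u v : ι → Vec S} {a b : Vec S}

lemma tendsto_Bform_of_tendsto_inv_norm_smul (hu : Tendsto (fun n => ‖u n‖⁻¹ • u n) l (𝓝 a))
    (hv : Tendsto (fun n => ‖v n‖⁻¹ • v n) l (𝓝 b)) :
    Tendsto (fun n => ‖u n‖⁻¹ * ‖v n‖⁻¹ * Bform k (u n) (v n)) l (𝓝 (Bform k a b)) := by
  refine ((continuous_Bform (k := k)).tendsto (a, b) |>.comp (hu.prodMk_nhds hv)).congr fun n => ?_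
  simp only [Function.comp_apply, Bform_smul_left, Bform_smul_right]
  ring

lemma Bform_self_eq_zero_of_tendsto_inv_norm_smul [l.NeBot] {c : ℝ}
    (hnorm : Tendsto (fun n => ‖u n‖) l atTop) (hc : ∀ n, Bform k (u n) (u n) = c)
    (hu : Tendsto (fun n => ‖u n‖⁻¹ • u n) l (𝓝 a)) : Bform k a a = 0 := by
  refine tendsto_nhds_unique (tendsto_Bform_of_tendsto_inv_norm_smul hu hu) ?_
  simpa [hc] using (hnorm.inv_tendsto_atTop.mul hnorm.inv_tendsto_atTop).mul_const c

end Normalize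

variable (k) in
def IsLorentzianBasis (b : Module.Basis (Fin (Fintype.card S)) ℝ (Vec S)) : Prop :=
  ∀ i j, Bform k (b i) (b j) = if i = j then (if (i : ℕ) + 1 = Fintype.card S then -1 else 1) else 0

namespace IsLorentzianBasis

variable {b : Module.Basis (Fin (Fintype.card S)) ℝ (Vec S)}

lemma nondegenerate (hb : IsLorentzianBasis k b) : (bilin k).Nondegenerate := by
  refine (LinearMap.BilinForm.iIsOrtho.nondegenerate_iff_not_isOrtho_basis_self _ b
    fun i j hij => ?_).mpr fun i => ?_
  · exact (bilin_apply _ _).trans ((hb i j).trans (if_neg hij))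
  · rw [bilin_apply, hb, if_pos rfl]
    split_ifs <;> norm_num

lemma exists_Bform_eq_neg_sum (hb : IsLorentzianBasis k b) :
    ∃ x₀ : Vec S, ∀ v, Bform k x₀ v = -∑ t, v t := by
  let σ : Module.Dual ℝ (Vec S) := -∑ t, LinearMap.proj t
  refine ⟨((bilin k).toDual hb.nondegenerate).symm σ, fun v => ?_⟩
  rw [← bilin_apply, ← LinearMap.BilinForm.toDual_def hb.nondegenerate,
    LinearEquiv.apply_symm_apply]
  simp [σ]

lemma Bform_self (hb : IsLorentzianBasis k b) (z : Vec S) :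
    Bform k z z = ∑ i, b.repr z i ^ 2 * (if (i : ℕ) + 1 = Fintype.card S then -1 else 1) := by
  rw [← bilin_apply, ← LinearMap.BilinForm.sum_repr_mul_repr_mul b,
    Finsupp.sum_fintype _ _ (by simp)]
  refine Finset.sum_congr rfl fun i _ => ?_
  rw [Finsupp.sum_fintype _ _ (by simp), Finset.sum_eq_single i (fun j _ hji => by
    rw [bilin_apply, hb, if_neg hji.symm, smul_zero, smul_zero]) (by simp)]
  rw [bilin_apply, hb, if_pos rfl, smul_eq_mul, smul_eq_mul]
  ring

lemma eq_zero_of_Bform_self_eq_zero (hb : IsLorentzianBasis k b) {z : Vec S}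
    {i₀ : Fin (Fintype.card S)} (hi₀ : (i₀ : ℕ) + 1 = Fintype.card S) (hz : b.repr z i₀ = 0)
    (hzz : Bform k z z = 0) : z = 0 := by
  have hterm : ∀ i, b.repr z i ^ 2 * (if (i : ℕ) + 1 = Fintype.card S then -1 else 1) =
      b.repr z i ^ 2 := by
    intro i
    by_cases hi : i = i₀
    · simp [hi, hz]
    · rw [if_neg fun h => hi (Fin.ext (by omega)), mul_one]
  rw [hb.Bform_self, Finset.sum_congr rfl fun i _ => hterm i] at hzz
  have hrepr : b.repr z = 0 := Finsupp.ext fun i =>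
    pow_eq_zero_iff two_ne_zero |>.mp
      ((Finset.sum_eq_zero_iff_of_nonneg fun j _ => sq_nonneg _).mp hzz i (Finset.mem_univ i))
  simpa using congrArg b.repr.symm hrepr

lemma eq_of_isotropic_of_orthogonal (hb : IsLorentzianBasis k b) (hk : ∀ s t, k s t = k t s)
    {x y : Vec S} (hx : 0 ≤ x) (hy : 0 ≤ y) (hxn : ‖x‖ = 1) (hyn : ‖y‖ = 1)
    (hxx : Bform k x x = 0) (hyy : Bform k y y = 0) (hxy : Bform k x y = 0) : x = y := by
  have hx0 : x ≠ 0 := by rintro rfl; simp at hxn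
  have hcard : 0 < Fintype.card S := Fintype.card_pos_iff.mpr <| by
    by_contra h
    exact hx0 (funext fun s => (not_nonempty_iff.mp h).elim s)
  let i₀ : Fin (Fintype.card S) := ⟨Fintype.card S - 1, by omega⟩
  have hi₀ : (i₀ : ℕ) + 1 = Fintype.card S := by simp only [i₀]; omega
  have hfx : b.coord i₀ x ≠ 0 := fun h => hx0 (hb.eq_zero_of_Bform_self_eq_zero hi₀ h hxx)
  have hprop := (bilin k).smul_eq_smul_of_isOrtho (b.coord i₀) (x := x) (y := y)
    (fun z hz hzz => hb.eq_zero_of_Bform_self_eq_zero hi₀ hz (by rwa [bilin_apply] at hzz))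
    (by rwa [bilin_apply]) (by rwa [bilin_apply]) (by rwa [bilin_apply])
    (by rwa [bilin_apply, Bform_comm hk])
  obtain ⟨t, hyt⟩ : ∃ t : ℝ, y = t • x := ⟨(b.coord i₀ x)⁻¹ * b.coord i₀ y, by
    rw [mul_smul, hprop, smul_smul, inv_mul_cancel₀ hfx, one_smul]⟩
  have ht : |t| = 1 := by simpa [hxn, hyn, norm_smul] using (congrArg norm hyt).symm
  rcases abs_eq zero_le_one |>.mp ht with h | h
  · rw [hyt, h, one_smul]
  · refine absurd (le_antisymm (fun i => ?_) hx) hx0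
    have := congrFun hyt i
    have := hy i
    simp_all

end IsLorentzianBasis

end BilinearForm

namespace LorentzianCoxeterSystem

open Polynomial.Chebyshev

variable {S W : Type} [Fintype S] [DecidableEq S] [Group W] (G : LorentzianCoxeterSystem S W)

lemma ρ_mul_apply (a b : W) (x : Vec S) : G.ρ (a * b) x = G.ρ a (G.ρ b x) := by
  rw [map_mul, LinearEquiv.mul_apply]

lemma ρ_apply_ρ_inv_apply (w : W) (x : Vec S) : G.ρ w (G.ρ w⁻¹ x) = x := by
  rw [← ρ_mul_apply, mul_inv_cancel, map_one]
  rfl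

lemma k_self (s : S) : G.k s s = 1 := by
  rw [G.k_fin s s (by simp), G.M.diagonal]
  simp

lemma Bform_simpleRoot (s t : S) : Bform G.k (simpleRoot s) (simpleRoot t) = G.k s t := by
  simp [Bform, simpleRoot, Pi.single_apply]

lemma Bform_ρ_simpleRoot_self (w : W) (s : S) :
    Bform G.k (G.ρ w (simpleRoot s)) (G.ρ w (simpleRoot s)) = 1 := by
  rw [G.ρ_preserves, Bform_simpleRoot, k_self]

lemma ρ_simpleRoot_ne_zero (w : W) (s : S) : G.ρ w (simpleRoot s) ≠ 0 := by
  simp [simpleRoot]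

lemma ρ_simple_apply (s : S) (x : Vec S) :
    G.ρ (G.cs.simple s) x = x - (2 * Bform G.k x (simpleRoot s)) • simpleRoot s := by
  rw [G.ρ_simple, Bform_simpleRoot, k_self, div_one]

lemma ρ_simple_simpleRoot (s t : S) :
    G.ρ (G.cs.simple s) (simpleRoot t) = simpleRoot t - (2 * G.k t s) • simpleRoot s := by
  rw [ρ_simple_apply, Bform_simpleRoot]

lemma ρ_simple_simpleRoot_self (s : S) : G.ρ (G.cs.simple s) (simpleRoot s) = -simpleRoot s := by
  rw [ρ_simple_simpleRoot, k_self]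
  module

lemma ρ_alternatingWord_simpleRoot (s t : S) (j : ℕ) :
    G.ρ (G.cs.wordProd (CoxeterSystem.alternatingWord s t j)) (simpleRoot s) =
      (U ℝ (if Even j then (j : ℤ) else j - 1)).eval (-G.k s t) • simpleRoot s +
      (U ℝ (if Even j then (j : ℤ) - 1 else j)).eval (-G.k s t) • simpleRoot t := by
  induction j with
  | zero => simp [CoxeterSystem.alternatingWord]
  | succ j ih =>
    rw [CoxeterSystem.alternatingWord_succ', CoxeterSystem.wordProd_cons, ρ_mul_apply, ih]
    have hU : (U ℝ ((j : ℤ) + 1)).eval (-G.k s t) =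
        2 * -G.k s t * (U ℝ j).eval (-G.k s t) - (U ℝ ((j : ℤ) - 1)).eval (-G.k s t) := by
      simp [U_add_one]
    by_cases hj : Even j <;>
      simp only [hj, Nat.even_add_one, not_true, not_false_eq_true, if_true, if_false, map_add,
        map_smul, ρ_simple_simpleRoot, k_self, G.k_symm t s] <;>
      push_cast <;> rw [add_sub_cancel_right, hU] <;> module

/-- The reducedness bounds the index by `m_{st}` when `m_{st} < ∞`, and `-𝓑(α_s, α_t)` is
then `cos (π / m_{st})`; otherwise it is at least `1`. -/
lemma U_eval_neg_k_nonneg {s t : S} (hst : s ≠ t) {j : ℕ}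
    (hred : G.cs.IsReduced (CoxeterSystem.alternatingWord t s (j + 1))) {n : ℤ} (hn : -1 ≤ n)
    (hnj : n ≤ j) : 0 ≤ (U ℝ n).eval (-G.k s t) := by
  by_cases hM : G.M s t = 0
  · exact U_eval_nonneg_of_one_le (by linarith [G.k_inf s t hM]) hn
  · have hjM : j + 1 ≤ G.M s t := by
      by_contra h
      exact G.cs.not_isReduced_alternatingWord t s (by rwa [G.M.symmetric])
        (by rw [G.M.symmetric]; omega) hred
    rw [G.k_fin s t hM, neg_neg]
    exact U_eval_cos_pi_div_nonneg (by have := G.M.off_diagonal s t hst; omega) hn (by omega)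

/-- Induction on `ℓ(w)`: for a descent `t` of `w`, split `w = u v` with `v` alternating in `s, t`
and `s, t` ascents of `u`; then `v(α_s)` is a nonnegative combination of `α_s, α_t`. -/
theorem ρ_simpleRoot_nonneg {w : W} {s : S}
    (h : G.cs.length (w * G.cs.simple s) = G.cs.length w + 1) : 0 ≤ G.ρ w (simpleRoot s) := by
  induction hn : G.cs.length w using Nat.strong_induction_on generalizing w s with
  | _ n ih =>
  by_cases hw : w = 1
  · simp [hw, simpleRoot]
  obtain ⟨t, ht⟩ := G.cs.exists_rightDescent_of_ne_one hw
  rw [CoxeterSystem.isRightDescent_iff] at ht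
  have hst : s ≠ t := by rintro rfl; omega
  obtain ⟨u, j, rfl, hlen, hj, hus, hut, hred⟩ := G.cs.exists_eq_mul_alternatingWord h ht
  rw [ρ_mul_apply, ρ_alternatingWord_simpleRoot, map_add, map_smul, map_smul]
  refine add_nonneg (smul_nonneg ?_ (ih _ (by omega) hus rfl))
    (smul_nonneg ?_ (ih _ (by omega) hut rfl)) <;>
    split_ifs <;> exact G.U_eval_neg_k_nonneg hst hred (by omega) (by omega)

lemma ρ_simpleRoot_nonpos {w : W} {s : S}
    (h : G.cs.length (w * G.cs.simple s) + 1 = G.cs.length w) : G.ρ w (simpleRoot s) ≤ 0 := by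
  have hpos := G.ρ_simpleRoot_nonneg (w := w * G.cs.simple s) (s := s)
    (by rw [CoxeterSystem.simple_mul_simple_cancel_right]; omega)
  rwa [ρ_mul_apply, ρ_simple_simpleRoot_self, map_neg, neg_nonneg] at hpos

/-- A right descent `s` of `g` is sent to a negative root, so the `s`-coordinate drops by at
least `1`. -/
lemma exists_one_le_norm_ρ_simpleRoot_sub {g : W} (hg : g ≠ 1) :
    ∃ s, 1 ≤ ‖G.ρ g (simpleRoot s) - simpleRoot s‖ := by
  obtain ⟨s, hs⟩ := G.cs.exists_rightDescent_of_ne_one hg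
  refine ⟨s, le_trans ?_ (norm_le_pi_norm _ s)⟩
  have hneg := G.ρ_simpleRoot_nonpos (G.cs.isRightDescent_iff.mp hs) s
  simp only [Pi.sub_apply, Pi.zero_apply, Real.norm_eq_abs, simpleRoot, Pi.single_eq_same]
    at hneg ⊢
  rw [abs_of_neg (by linarith)]
  linarith

variable {ω : ℕ → S}

lemma prefixProd_zero (ω : ℕ → S) : G.prefixProd ω 0 = 1 := by
  simp [prefixProd]

lemma prefixProd_succ (ω : ℕ → S) (n : ℕ) :
    G.prefixProd ω (n + 1) = G.prefixProd ω n * G.cs.simple (ω n) := by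
  rw [prefixProd, prefixProd, List.ofFn_succ', CoxeterSystem.wordProd_concat]
  simp only [Fin.val_castSucc, Fin.val_last]

lemma length_prefixProd_inv_mul (hred : G.IsInfiniteReducedWord ω) {a b : ℕ} (hab : a ≤ b) :
    G.cs.length ((G.prefixProd ω a)⁻¹ * G.prefixProd ω b) = b - a := by
  have hle : G.cs.length ((G.prefixProd ω a)⁻¹ * G.prefixProd ω b) ≤ b - a := by
    induction b, hab using Nat.le_induction with
    | base => simp
    | succ b hab ih =>
      have := G.cs.length_mul_le ((G.prefixProd ω a)⁻¹ * G.prefixProd ω b) (G.cs.simple (ω b))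
      rw [mul_assoc, ← prefixProd_succ, G.cs.length_simple] at this
      omega
  have hge := G.cs.length_mul_le (G.prefixProd ω a) ((G.prefixProd ω a)⁻¹ * G.prefixProd ω b)
  rw [mul_inv_cancel_left, hred, hred] at hge
  omega

/-- The paper's `w_{k-1}(α_{s_k})`, indexed from `0`. -/
def invRoot (ω : ℕ → S) (n : ℕ) : Vec S := G.ρ (G.prefixProd ω n) (simpleRoot (ω n))

lemma Bform_invRoot_self (n : ℕ) : Bform G.k (G.invRoot ω n) (G.invRoot ω n) = 1 :=
  G.Bform_ρ_simpleRoot_self _ _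

lemma invRoot_ne_zero (n : ℕ) : G.invRoot ω n ≠ 0 := G.ρ_simpleRoot_ne_zero _ _

lemma invRoot_nonneg (hred : G.IsInfiniteReducedWord ω) (n : ℕ) : 0 ≤ G.invRoot ω n :=
  G.ρ_simpleRoot_nonneg (by rw [← prefixProd_succ, hred, hred])

lemma invRoot_eq_ρ_prefixProd (k j : ℕ) : G.invRoot ω j =
    G.ρ (G.prefixProd ω k) (G.ρ ((G.prefixProd ω k)⁻¹ * G.prefixProd ω j) (simpleRoot (ω j))) := by
  rw [← ρ_mul_apply, mul_inv_cancel_left, invRoot]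

lemma prefixProd_inv_mul_mul_simple (k j : ℕ) :
    (G.prefixProd ω k)⁻¹ * G.prefixProd ω j * G.cs.simple (ω j) =
      (G.prefixProd ω k)⁻¹ * G.prefixProd ω (j + 1) := by
  rw [prefixProd_succ, mul_assoc]

lemma ρ_prefixProd_inv_mul_nonneg (hred : G.IsInfiniteReducedWord ω) {k j : ℕ} (hkj : k ≤ j) :
    0 ≤ G.ρ ((G.prefixProd ω k)⁻¹ * G.prefixProd ω j) (simpleRoot (ω j)) := by
  refine G.ρ_simpleRoot_nonneg ?_
  rw [prefixProd_inv_mul_mul_simple, G.length_prefixProd_inv_mul hred hkj,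
    G.length_prefixProd_inv_mul hred (by omega)]
  omega

lemma ρ_prefixProd_inv_mul_nonpos (hred : G.IsInfiniteReducedWord ω) {k j : ℕ} (hjk : j < k) :
    G.ρ ((G.prefixProd ω k)⁻¹ * G.prefixProd ω j) (simpleRoot (ω j)) ≤ 0 := by
  refine G.ρ_simpleRoot_nonpos ?_
  have h₁ := G.length_prefixProd_inv_mul hred hjk.le
  have h₂ := G.length_prefixProd_inv_mul hred (Nat.succ_le_of_lt hjk)
  rw [← G.cs.length_inv, mul_inv_rev, inv_inv] at h₁ h₂
  rw [prefixProd_inv_mul_mul_simple, h₁, h₂]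
  omega

section Orbit

variable {x₀ : Vec S}

def prefixOrbit (ω : ℕ → S) (x₀ : Vec S) (k : ℕ) : Vec S := G.ρ (G.prefixProd ω k) x₀

lemma prefixOrbit_succ (hx₀ : ∀ v, Bform G.k x₀ v = -∑ t, v t) (k : ℕ) :
    G.prefixOrbit ω x₀ (k + 1) = G.prefixOrbit ω x₀ k + (2 : ℝ) • G.invRoot ω k := by
  have hα : Bform G.k x₀ (simpleRoot (ω k)) = -1 := by simp [hx₀, simpleRoot]
  rw [prefixOrbit, prefixProd_succ, ρ_mul_apply, ρ_simple_apply, hα, map_sub, map_smul,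
    prefixOrbit, invRoot]
  module

lemma Bform_prefixOrbit_invRoot (hx₀ : ∀ v, Bform G.k x₀ v = -∑ t, v t) (k j : ℕ) :
    Bform G.k (G.prefixOrbit ω x₀ k) (G.invRoot ω j) =
      -∑ t, G.ρ ((G.prefixProd ω k)⁻¹ * G.prefixProd ω j) (simpleRoot (ω j)) t := by
  rw [prefixOrbit, G.invRoot_eq_ρ_prefixProd k j, G.ρ_preserves, hx₀]

lemma Bform_prefixOrbit_invRoot_neg (hred : G.IsInfiniteReducedWord ω)
    (hx₀ : ∀ v, Bform G.k x₀ v = -∑ t, v t) {k j : ℕ} (hkj : k ≤ j) :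
    Bform G.k (G.prefixOrbit ω x₀ k) (G.invRoot ω j) < 0 := by
  rw [Bform_prefixOrbit_invRoot G hx₀, neg_neg_iff_pos]
  exact sum_pos_of_nonneg (G.ρ_prefixProd_inv_mul_nonneg hred hkj) (G.ρ_simpleRoot_ne_zero _ _)

lemma Bform_prefixOrbit_invRoot_pos (hred : G.IsInfiniteReducedWord ω)
    (hx₀ : ∀ v, Bform G.k x₀ v = -∑ t, v t) {k j : ℕ} (hjk : j < k) :
    0 < Bform G.k (G.prefixOrbit ω x₀ k) (G.invRoot ω j) := by
  rw [Bform_prefixOrbit_invRoot G hx₀, ← Finset.sum_neg_distrib]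
  exact sum_pos_of_nonneg (neg_nonneg.mpr (G.ρ_prefixProd_inv_mul_nonpos hred hjk))
    (neg_ne_zero.mpr (G.ρ_simpleRoot_ne_zero _ _))

lemma prefixOrbit_ne_zero (hred : G.IsInfiniteReducedWord ω)
    (hx₀ : ∀ v, Bform G.k x₀ v = -∑ t, v t) (k : ℕ) : G.prefixOrbit ω x₀ k ≠ 0 := fun h => by
  simpa [h, Bform_zero_left] using G.Bform_prefixOrbit_invRoot_neg hred hx₀ (le_refl k)

lemma le_prefixOrbit (hred : G.IsInfiniteReducedWord ω) (hx₀ : ∀ v, Bform G.k x₀ v = -∑ t, v t)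
    (k : ℕ) : x₀ ≤ G.prefixOrbit ω x₀ k := by
  induction k with
  | zero => simp [prefixOrbit, prefixProd_zero]
  | succ k ih =>
    rw [prefixOrbit_succ G hx₀]
    exact le_add_of_le_of_nonneg ih (smul_nonneg zero_le_two (G.invRoot_nonneg hred k))

/-- The coordinate sum grows by at least `2c` per step, `c` a lower bound for norms of roots. -/
lemma tendsto_norm_prefixOrbit_atTop (hred : G.IsInfiniteReducedWord ω)
    (hx₀ : ∀ v, Bform G.k x₀ v = -∑ t, v t) :
    Tendsto (fun k => ‖G.prefixOrbit ω x₀ k‖) atTop atTop := by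
  obtain ⟨c, hc, hcβ⟩ := exists_pos_le_norm_of_Bform_self_eq_one (k := G.k)
  have hsum : ∀ k : ℕ, ∑ t, x₀ t + 2 * c * k ≤ ∑ t, G.prefixOrbit ω x₀ k t := by
    intro k
    induction k with
    | zero => simp [prefixOrbit, prefixProd_zero]
    | succ k ih =>
      have hβ := (hcβ _ (G.Bform_invRoot_self k)).trans
        (norm_le_sum_of_nonneg (G.invRoot_nonneg hred k))
      simp only [prefixOrbit_succ G hx₀, Pi.add_apply, Pi.smul_apply, smul_eq_mul,
        Finset.sum_add_distrib, ← Finset.mul_sum]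
      push_cast
      linarith
  have hcard : (0 : ℝ) < Fintype.card S := by
    have : Nonempty S := ⟨ω 0⟩
    exact_mod_cast Fintype.card_pos
  refine tendsto_atTop_mono (fun k => (div_le_iff₀' hcard).mpr
    ((hsum k).trans (sum_le_card_mul_norm _))) ?_
  exact Tendsto.atTop_div_const hcard (tendsto_atTop_add_const_left _ _
    (tendsto_natCast_atTop_atTop.const_mul_atTop (by positivity)))

/-- `[w_k(x₀)] = [w_j(x₀)]` with `j < k` is impossible: `w_k(x₀)` pairs negatively with `β_k`
and positively with `β_j`, while `w_j(x₀)` pairs negatively with both. -/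
lemma injective_mk_prefixOrbit (hred : G.IsInfiniteReducedWord ω)
    (hx₀ : ∀ v, Bform G.k x₀ v = -∑ t, v t) :
    Function.Injective fun k =>
      Projectivization.mk ℝ (G.prefixOrbit ω x₀ k) (G.prefixOrbit_ne_zero hred hx₀ k) := by
  suffices h : ∀ j k, j < k →
      Projectivization.mk ℝ (G.prefixOrbit ω x₀ k) (G.prefixOrbit_ne_zero hred hx₀ k) ≠
        Projectivization.mk ℝ (G.prefixOrbit ω x₀ j) (G.prefixOrbit_ne_zero hred hx₀ j) by
    intro i j hij
    by_contra hne
    rcases Nat.lt_or_gt_of_ne hne with hlt | hlt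
    exacts [h i j hlt hij.symm, h j i hlt hij]
  intro j k hjk heq
  obtain ⟨t, ht⟩ := (Projectivization.mk_eq_mk_iff' ℝ _ _ _ _).mp heq
  have hkk := G.Bform_prefixOrbit_invRoot_neg hred hx₀ (le_refl k)
  have hjk' := G.Bform_prefixOrbit_invRoot_neg hred hx₀ hjk.le
  have hkj := G.Bform_prefixOrbit_invRoot_pos hred hx₀ hjk
  have hjj := G.Bform_prefixOrbit_invRoot_neg hred hx₀ (le_refl j)
  rw [← ht, Bform_smul_left] at hkk hkj
  nlinarith

end Orbit

def invReflection (ω : ℕ → S) (n : ℕ) : W :=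
  G.prefixProd ω n * G.cs.simple (ω n) * (G.prefixProd ω n)⁻¹

lemma ρ_invReflection_apply (n : ℕ) (x : Vec S) :
    G.ρ (G.invReflection ω n) x = Bform.reflect G.k (G.invRoot ω n) x := by
  have hB : Bform G.k (G.ρ (G.prefixProd ω n)⁻¹ x) (simpleRoot (ω n)) =
      Bform G.k x (G.invRoot ω n) := by
    rw [← G.ρ_preserves (G.prefixProd ω n), ρ_apply_ρ_inv_apply, invRoot]
  rw [invReflection, ρ_mul_apply, ρ_mul_apply, ρ_simple_apply, hB, map_sub, map_smul,
    ρ_apply_ρ_inv_apply, Bform.reflect, invRoot]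

lemma invReflection_mul_self (n : ℕ) : G.invReflection ω n * G.invReflection ω n = 1 := by
  simp [invReflection, mul_assoc, G.cs.simple_mul_simple_cancel_left]

lemma invReflection_injective (hred : G.IsInfiniteReducedWord ω) :
    Function.Injective (G.invReflection ω) := by
  suffices h : ∀ i j, i < j → G.invReflection ω i ≠ G.invReflection ω j by
    intro i j hij
    by_contra hne
    rcases Nat.lt_or_gt_of_ne hne with hlt | hlt
    exacts [h i j hlt hij, h j i hlt hij.symm]
  intro i j hij h
  have hfac : G.prefixProd ω (j + 1) =
      G.prefixProd ω i * ((G.prefixProd ω (i + 1))⁻¹ * G.prefixProd ω j) := by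
    have : G.prefixProd ω (j + 1) = G.invReflection ω j * G.prefixProd ω j := by
      simp [invReflection, prefixProd_succ]
    rw [this, ← h, invReflection, prefixProd_succ, mul_inv_rev, CoxeterSystem.inv_simple]
    group
  have hlen := G.cs.length_mul_le (G.prefixProd ω i)
    ((G.prefixProd ω (i + 1))⁻¹ * G.prefixProd ω j)
  rw [← hfac, hred, hred, G.length_prefixProd_inv_mul hred hij] at hlen
  omega

lemma invReflection_mul_ne_one (hred : G.IsInfiniteReducedWord ω) {m n : ℕ} (hmn : m ≠ n) :
    G.invReflection ω m * G.invReflection ω n ≠ 1 := fun h =>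
  hmn (G.invReflection_injective hred (mul_eq_one_iff_eq_inv.mp h |>.trans
    (inv_eq_of_mul_eq_one_right (G.invReflection_mul_self n))))

theorem tendsto_norm_invRoot_atTop (hred : G.IsInfiniteReducedWord ω) :
    Tendsto (fun n => ‖G.invRoot ω n‖) atTop atTop := by
  by_contra hcon
  obtain ⟨R, hR⟩ := not_forall.mp (mt tendsto_atTop.mpr hcon)
  obtain ⟨γ, -, φ, hφ, hlim⟩ := (isCompact_closedBall (0 : Vec S) R).tendsto_subseq'
    ((not_eventually.mp hR).mono fun n hn => mem_closedBall_zero_iff.mpr (not_le.mp hn).le)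
  have hγ : Bform G.k γ γ = 1 := tendsto_nhds_unique
    ((continuous_Bform.tendsto (γ, γ)).comp (hlim.prodMk_nhds hlim))
    (by simp only [Function.comp_def, G.Bform_invRoot_self, tendsto_const_nhds])
  have hnext : Tendsto (fun n => G.invRoot ω (φ (n + 1))) atTop (𝓝 γ) :=
    hlim.comp (tendsto_add_atTop_nat 1)
  have hclose : ∀ s, ∀ᶠ n in atTop, ‖Bform.reflect G.k (G.invRoot ω (φ n))
      (Bform.reflect G.k (G.invRoot ω (φ (n + 1))) (simpleRoot s)) - simpleRoot s‖ < 1 := by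
    intro s
    have hcont : Continuous fun p : Vec S × Vec S =>
        Bform.reflect G.k p.1 (Bform.reflect G.k p.2 (simpleRoot s)) :=
      continuous_Bform_reflect.comp (continuous_fst.prodMk (continuous_Bform_reflect.comp
        (continuous_snd.prodMk continuous_const)))
    have := ((hcont.tendsto (γ, γ)).comp (hlim.prodMk_nhds hnext)).sub_const (simpleRoot s)
    rw [Bform.reflect_reflect hγ, sub_self] at this
    exact this.norm.eventually (gt_mem_nhds (by simp))
  obtain ⟨n, hn⟩ := (eventually_all.mpr hclose).exists
  obtain ⟨s, hs⟩ := G.exists_one_le_norm_ρ_simpleRoot_sub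
    (G.invReflection_mul_ne_one hred (hφ n.lt_succ_self).ne)
  rw [ρ_mul_apply, ρ_invReflection_apply, ρ_invReflection_apply] at hs
  exact (hn s).not_ge hs

lemma eq_of_tendsto_inv_norm_smul_prefixOrbit_invRoot {x₀ a c : Vec S} {φ ψ : ℕ → ℕ}
    (hred : G.IsInfiniteReducedWord ω) (hx₀ : ∀ v, Bform G.k x₀ v = -∑ t, v t)
    (hφ : StrictMono φ) (hψ : StrictMono ψ)
    (ha : Tendsto (fun n => ‖G.prefixOrbit ω x₀ (φ n)‖⁻¹ • G.prefixOrbit ω x₀ (φ n)) atTop (𝓝 a))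
    (hc : Tendsto (fun n => ‖G.invRoot ω (ψ n)‖⁻¹ • G.invRoot ω (ψ n)) atTop (𝓝 c)) :
    a = c := by
  have hyφ := (G.tendsto_norm_prefixOrbit_atTop hred hx₀).comp hφ.tendsto_atTop
  have hβψ := (G.tendsto_norm_invRoot_atTop hred).comp hψ.tendsto_atTop
  obtain ⟨b, hb⟩ := G.lorentzian
  refine IsLorentzianBasis.eq_of_isotropic_of_orthogonal hb G.k_symm ?_ ?_
    (norm_eq_one_of_tendsto_inv_norm_smul (fun n => G.prefixOrbit_ne_zero hred hx₀ _) ha)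
    (norm_eq_one_of_tendsto_inv_norm_smul (fun n => G.invRoot_ne_zero _) hc)
    (Bform_self_eq_zero_of_tendsto_inv_norm_smul hyφ (fun n => G.ρ_preserves _ x₀ x₀) ha)
    (Bform_self_eq_zero_of_tendsto_inv_norm_smul hβψ (fun n => G.Bform_invRoot_self _) hc)
    (le_antisymm ?_ ?_)
  · have := ha.sub (hyφ.inv_tendsto_atTop.smul_const x₀)
    rw [zero_smul, sub_zero] at this
    refine ge_of_tendsto' this fun n => ?_
    show 0 ≤ ‖G.prefixOrbit ω x₀ (φ n)‖⁻¹ • G.prefixOrbit ω x₀ (φ n) -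
      ‖G.prefixOrbit ω x₀ (φ n)‖⁻¹ • x₀
    rw [← smul_sub]
    exact smul_nonneg (inv_nonneg.mpr (norm_nonneg _))
      (sub_nonneg.mpr (G.le_prefixOrbit hred hx₀ _))
  · exact ge_of_tendsto' hc fun n =>
      smul_nonneg (inv_nonneg.mpr (norm_nonneg _)) (G.invRoot_nonneg hred _)
  · refine le_of_tendsto' (tendsto_Bform_of_tendsto_inv_norm_smul ha
      (hc.comp hφ.tendsto_atTop)) fun n => mul_nonpos_of_nonneg_of_nonpos (by positivity) ?_
    exact (G.Bform_prefixOrbit_invRoot_neg hred hx₀ (hψ.id_le (φ n))).le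
  · refine ge_of_tendsto' (tendsto_Bform_of_tendsto_inv_norm_smul
      (ha.comp ((tendsto_add_atTop_nat 1).comp hψ.tendsto_atTop)) hc) fun n =>
      mul_nonneg (by positivity) ?_
    exact (G.Bform_prefixOrbit_invRoot_pos hred hx₀
      ((Nat.lt_succ_self _).trans_le (hφ.id_le _))).le

theorem exists_tendsto_inv_norm_smul_prefixOrbit_invRoot {x₀ : Vec S}
    (hred : G.IsInfiniteReducedWord ω) (hx₀ : ∀ v, Bform G.k x₀ v = -∑ t, v t) :
    ∃ ζ : Vec S, ζ ≠ 0 ∧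
      Tendsto (fun k => ‖G.prefixOrbit ω x₀ k‖⁻¹ • G.prefixOrbit ω x₀ k) atTop (𝓝 ζ) ∧
      Tendsto (fun n => ‖G.invRoot ω n‖⁻¹ • G.invRoot ω n) atTop (𝓝 ζ) := by
  obtain ⟨ζ, hζy, hζβ⟩ := exists_tendsto_of_subseq_limits_eq (isCompact_sphere (0 : Vec S) 1)
    (u := fun k => ‖G.prefixOrbit ω x₀ k‖⁻¹ • G.prefixOrbit ω x₀ k)
    (v := fun n => ‖G.invRoot ω n‖⁻¹ • G.invRoot ω n)
    (fun k => mem_sphere_zero_iff_norm.mpr (norm_smul_inv_norm (G.prefixOrbit_ne_zero hred hx₀ k)))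
    (fun n => mem_sphere_zero_iff_norm.mpr (norm_smul_inv_norm (G.invRoot_ne_zero (ω := ω) n)))
    fun _ _ _ _ hφ hψ ha hc =>
      G.eq_of_tendsto_inv_norm_smul_prefixOrbit_invRoot hred hx₀ hφ hψ ha hc
  refine ⟨ζ, fun h => ?_, hζy, hζβ⟩
  simpa [h] using norm_eq_one_of_tendsto_inv_norm_smul G.invRoot_ne_zero hζβ

end LorentzianCoxeterSystem

open LorentzianCoxeterSystem Filter

variable {S W : Type} [Fintype S] [DecidableEq S] [Group W]

/-- The accumulation point of the projective inversion set of an infinite reduced word arises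
as a limit direction through the sequence of prefixes. -/
theorem accumPt_arises_through_prefixes (G : LorentzianCoxeterSystem S W)
    (ω : ℕ → S) (hred : G.IsInfiniteReducedWord ω)
    (p : ℙ ℝ (Vec S)) (hp : IsAccumPt p (G.projInvSet ω)) :
    ∃ p₀ : ℙ ℝ (Vec S),
      Function.Injective (fun k => G.pact (G.prefixProd ω k) p₀) ∧
      Tendsto (fun k => G.pact (G.prefixProd ω k) p₀) atTop (nhds p) := by
  obtain ⟨b, hb⟩ := G.lorentzian
  obtain ⟨x₀, hx₀⟩ := IsLorentzianBasis.exists_Bform_eq_neg_sum hb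
  have hx₀0 : x₀ ≠ 0 := by
    simpa [prefixOrbit, prefixProd_zero] using G.prefixOrbit_ne_zero hred hx₀ 0
  obtain ⟨ζ, hζ, hyζ, hβζ⟩ := G.exists_tendsto_inv_norm_smul_prefixOrbit_invRoot hred hx₀
  have hpζ : p = Projectivization.mk ℝ ζ hζ := by
    refine eq_of_isAccumPt_of_tendsto hp ?_ (tendsto_mk_of_tendsto_smul G.invRoot_ne_zero
      (fun n => inv_ne_zero (norm_ne_zero_iff.mpr (G.invRoot_ne_zero n))) hζ hβζ)
    rintro _ ⟨v, -, ⟨n, rfl⟩, rfl⟩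
    exact ⟨n, rfl⟩
  refine ⟨Projectivization.mk ℝ x₀ hx₀0, G.injective_mk_prefixOrbit hred hx₀, ?_⟩
  rw [hpζ]
  exact tendsto_mk_of_tendsto_smul _
    (fun k => inv_ne_zero (norm_ne_zero_iff.mpr (G.prefixOrbit_ne_zero hred hx₀ k))) hζ hyζ
end
end

section
/- Let w ∈ W be a hyperbolic element of a Lorentzian Coxeter system (W,S)_B: suppose λ ∈ ℝ with λ > 1 and x, y ∈ V are nonzero vectors with ρ(w)x = λx and ρ(w)y = λ⁻¹y. Then every nonzero z ∈ V with 𝓑(z,x) = 𝓑(z,y) = 0 gives a limit direction: z̄ ∈ E_V. -/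
open Projectivization Filter Topology TensorProduct
open scoped LinearAlgebra.Projectivization

noncomputable section

open LorentzianCoxeterSystem Filter

variable {S W : Type} [Fintype S] [DecidableEq S] [Group W]

/-!
`𝓑` is invariant under `w`, so the eigenvectors `x` and `y` are isotropic; in signature
`(n-1, 1)` two independent isotropic vectors are not orthogonal, and then `𝓑` is positive
definite on `U = {x, y}^⊥`. The isometry `w` preserves `U`, so the orbit of `z` is bounded and
`z` is recurrent: `w^(m i) z → z` along some `m i → ∞`. Starting from `z + y`, the `y`-part is
contracted to `0`, so `w^(m i) (z + y) → z`, and the lines through these vectors are pairwise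
distinct because `𝓑(v, x)² / 𝓑(v, v)` gets divided by `λ²` at each step.
-/

open Module

namespace LinearMap.BilinForm

section Lorentzian

variable {V : Type*} [AddCommGroup V] [Module ℝ V] {B : LinearMap.BilinForm ℝ V} {n : ℕ}
  (b : Basis (Fin n) ℝ V)
  (hb : ∀ i j, B (b i) (b j) = if i = j then (if (i : ℕ) + 1 = n then -1 else 1) else 0)
include hb

theorem apply_self_pos_of_repr_last_eq_zero {v : V} (hv : v ≠ 0)
    (hlast : ∀ i : Fin n, (i : ℕ) + 1 = n → b.repr v i = 0) : 0 < B v v := by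
  have hdiag :
      toMatrix b B = Matrix.diagonal fun i : Fin n => if (i : ℕ) + 1 = n then -1 else 1 := by
    ext i j
    rw [toMatrix_apply, hb, Matrix.diagonal_apply]
  simp only [apply_eq_dotProduct_toMatrix_mulVec b, hdiag, dotProduct, Matrix.mulVec_diagonal]
  obtain ⟨j, hj⟩ : ∃ j, b.repr v j ≠ 0 := by
    by_contra! h
    exact hv (b.repr.map_eq_zero_iff.mp (Finsupp.ext h))
  refine Finset.sum_pos' (fun i _ => ?_) ⟨j, Finset.mem_univ j, ?_⟩
  · split_ifs with hi
    · simp [hlast i hi]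
    · nlinarith [mul_self_nonneg (b.repr v i)]
  · rw [if_neg fun h => hj (hlast j h)]
    nlinarith [mul_self_pos.mpr hj]

theorem exists_apply_self_pos_of_linearIndependent {u v : V}
    (huv : LinearIndependent ℝ ![u, v]) : ∃ a c : ℝ, 0 < B (a • u + c • v) (a • u + c • v) := by
  rcases n with _ | m
  · exact absurd (b.ext_elem fun i => i.elim0) (huv.ne_zero 0)
  set α := b.repr u (Fin.last m)
  set β := b.repr v (Fin.last m)
  have hlast : ∀ i : Fin (m + 1), (i : ℕ) + 1 = m + 1 → i = Fin.last m := fun i hi =>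
    Fin.ext (by rw [Fin.val_last]; omega)
  -- `β • u - α • v` lies in the plane and has last coordinate `0`
  by_cases hw : β • u + (-α) • v = 0
  · obtain ⟨-, hα⟩ := LinearIndependent.pair_iff.mp huv _ _ hw
    refine ⟨1, 0, ?_⟩
    rw [one_smul, zero_smul, add_zero]
    exact apply_self_pos_of_repr_last_eq_zero b hb (huv.ne_zero 0)
      fun i hi => by rw [hlast i hi]; exact neg_eq_zero.mp hα
  · refine ⟨β, -α, apply_self_pos_of_repr_last_eq_zero b hb hw fun i hi => ?_⟩
    simp only [hlast i hi, map_add, map_smul, Finsupp.coe_add, Finsupp.coe_smul, Pi.add_apply,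
      Pi.smul_apply, smul_eq_mul, α, β]
    ring

variable (hB : B.IsSymm)
include hB

theorem apply_ne_zero_of_isotropic {x y : V} (hxy : LinearIndependent ℝ ![x, y])
    (hx : B x x = 0) (hy : B y y = 0) : B x y ≠ 0 := by
  intro h
  obtain ⟨a, c, hpos⟩ := exists_apply_self_pos_of_linearIndependent b hb hxy
  simp [hx, hy, h, hB.eq y x] at hpos

theorem apply_self_pos_of_isOrtho {x y v : V} (hx : B x x = 0) (hxy : B x y ≠ 0)
    (hvx : B v x = 0) (hvy : B v y = 0) (hv : v ≠ 0) : 0 < B v v := by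
  by_contra! hle
  have hvx_indep : LinearIndependent ℝ ![v, x] := LinearIndependent.pair_iff.mpr fun a c h => by
    have hc : c * B x y = 0 := by simpa [hvy] using congrArg (B · y) h
    have hc0 : c = 0 := (mul_eq_zero.mp hc).resolve_right hxy
    subst hc0
    exact ⟨(smul_eq_zero.mp (by simpa using h)).resolve_right hv, rfl⟩
  obtain ⟨a, c, hpos⟩ := exists_apply_self_pos_of_linearIndependent b hb hvx_indep
  simp only [map_add, map_smul, LinearMap.add_apply, smul_apply, smul_eq_mul, hvx, hx,
    hB.eq x v, mul_zero, add_zero] at hpos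
  nlinarith [mul_self_nonneg a]

end Lorentzian

section Isometry

variable {V : Type*} [AddCommGroup V] [Module ℝ V] {B : LinearMap.BilinForm ℝ V}
  {T : Module.End ℝ V} (hT : ∀ u v, B (T u) (T v) = B u v)
include hT

theorem pow_apply_pow (n : ℕ) (u v : V) : B ((T ^ n) u) ((T ^ n) v) = B u v := by
  induction n with
  | zero => rfl
  | succ n ih => rw [pow_succ', Module.End.mul_apply, Module.End.mul_apply, hT, ih]

theorem apply_self_eq_zero_of_hasEigenvector {μ : ℝ} {x : V} (hx : T.HasEigenvector μ x)
    (hμ : μ * μ ≠ 1) : B x x = 0 := by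
  have h := hT x x
  rw [hx.apply_eq_smul, smul_left, smul_right, ← mul_assoc] at h
  by_contra hxx
  exact hμ ((mul_eq_right₀ hxx).mp h)

theorem apply_eq_zero_of_hasEigenvector {μ : ℝ}
    {x v : V} (hx : T.HasEigenvector μ x) (hμ : μ ≠ 0) (hv : B v x = 0) : B (T v) x = 0 := by
  have h := hT v x
  rw [hx.apply_eq_smul, smul_right, hv] at h
  exact (mul_eq_zero.mp h).resolve_left hμ

theorem injective_span_singleton_pow_apply {l : ℝ}
    (hl : 1 < l) {x v : V} (hx : T.HasEigenvector l x) (hv : B v v ≠ 0) (hvx : B v x ≠ 0) :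
    Function.Injective fun n => ℝ ∙ (T ^ n) v := by
  set f : V → ℝ := fun u => B u x ^ 2 / B u u
  have hf_smul (a : ℝˣ) (u : V) : f (a • u) = f u := by
    simp only [f, Units.smul_def, smul_left, smul_right, mul_pow, ← mul_assoc, ← sq]
    exact mul_div_mul_left _ _ (pow_ne_zero 2 a.ne_zero)
  have hl0 : 0 < l := one_pos.trans hl
  have hf_pow (n : ℕ) : f ((T ^ n) v) = f v / (l ^ n) ^ 2 := by
    have hpow := pow_apply_pow hT n v x
    rw [hx.pow_apply, smul_right] at hpow
    have hTv : B ((T ^ n) v) x = B v x / l ^ n := by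
      rw [← hpow, mul_div_cancel_left₀ _ (by positivity)]
    simp only [f, pow_apply_pow hT, hTv, div_pow, div_right_comm]
  have hfv : f v ≠ 0 := div_ne_zero (pow_ne_zero 2 hvx) hv
  intro n k hnk
  obtain ⟨a, ha⟩ := Submodule.span_singleton_eq_span_singleton.mp hnk
  have h := congrArg f ha
  rw [hf_smul, hf_pow, hf_pow, div_eq_div_iff (by positivity) (by positivity)] at h
  have hsq := mul_left_cancel₀ hfv h
  exact (pow_right_injective₀ hl0 hl.ne'
    ((pow_left_inj₀ (by positivity) (by positivity) two_ne_zero).mp hsq)).symm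

end Isometry

section Normed

variable {E : Type*} [NormedAddCommGroup E] [NormedSpace ℝ E] [FiniteDimensional ℝ E]
  {B : LinearMap.BilinForm ℝ E}

theorem continuous_apply_self (B : LinearMap.BilinForm ℝ E) : Continuous fun v => B v v := by
  have := isModuleTopologyOfFiniteDimensional (𝕜 := ℝ) (E := E)
  exact (IsModuleTopology.continuous_bilinear_of_finite_left B).comp
    (continuous_id.prodMk continuous_id)

theorem exists_pos_mul_norm_sq_le {U : Submodule ℝ E} (hU : ∀ v ∈ U, v ≠ 0 → 0 < B v v) :
    ∃ c > 0, ∀ v ∈ U, c * ‖v‖ ^ 2 ≤ B v v := by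
  have hcompact : IsCompact ((U : Set E) ∩ Metric.sphere 0 1) :=
    (isCompact_sphere 0 1).inter_left U.closed_of_finiteDimensional
  obtain ⟨c, hc, hmin⟩ := hcompact.exists_forall_le' (continuous_apply_self B).continuousOn
    fun v hv => hU v hv.1 (ne_zero_of_mem_unit_sphere ⟨v, hv.2⟩)
  refine ⟨c, hc, fun v hv => ?_⟩
  rcases eq_or_ne v 0 with rfl | hv0
  · simp
  have hnorm : 0 < ‖v‖ := norm_pos_iff.mpr hv0
  have := hmin (‖v‖⁻¹ • v) ⟨U.smul_mem _ hv, by simp [norm_smul, hnorm.ne']⟩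
  simp only [map_smul, smul_apply, smul_eq_mul] at this
  calc c * ‖v‖ ^ 2 ≤ ‖v‖⁻¹ * (‖v‖⁻¹ * B v v) * ‖v‖ ^ 2 := by gcongr
    _ = B v v := by field_simp

/-- In the norm of `B`, `T ^ p` moves `z` exactly as far as it moves `(T ^ a) z`; choosing
`(T ^ a) z` and `(T ^ (a + p)) z` close together in the bounded orbit makes this small. -/
theorem mapClusterPt_pow_apply_self {T : Module.End ℝ E} (hT : ∀ u v, B (T u) (T v) = B u v)
    {U : Submodule ℝ E} (hTU : ∀ v ∈ U, T v ∈ U) (hU : ∀ v ∈ U, v ≠ 0 → 0 < B v v)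
    {z : E} (hz : z ∈ U) : MapClusterPt z atTop fun n => (T ^ n) z := by
  obtain ⟨c, hc, hcB⟩ := exists_pos_mul_norm_sq_le hU
  have hbdd : ∀ n, (T ^ n) z ∈ Metric.closedBall 0 √(B z z / c) := fun n => by
    rw [mem_closedBall_zero_iff, Real.le_sqrt (norm_nonneg _)
      (div_nonneg ((by positivity : 0 ≤ c * ‖z‖ ^ 2).trans (hcB z hz)) hc.le), le_div_iff₀ hc,
      mul_comm, ← pow_apply_pow hT n z z]
    exact hcB _ (Module.End.pow_apply_mem_of_forall_mem n hTU z hz)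
  obtain ⟨u, -, φ, hφ, hlim⟩ := tendsto_subseq_of_bounded Metric.isBounded_closedBall hbdd
  refine mapClusterPt_iff_frequently.mpr fun s hs => ?_
  obtain ⟨ε, hε, hball⟩ := Metric.mem_nhds_iff.mp hs
  refine frequently_atTop.mpr fun N => ?_
  set d : ℕ → E := fun i => (T ^ φ (i + (N + 1))) z - (T ^ φ i) z
  have hd : Tendsto (fun i => B (d i) (d i)) atTop (𝓝 0) := by
    have hd0 : Tendsto d atTop (𝓝 (u - u)) :=
      (hlim.comp (tendsto_add_atTop_nat (N + 1))).sub hlim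
    have h := ((continuous_apply_self B).tendsto 0).comp (sub_self u ▸ hd0)
    rwa [zero_left] at h
  obtain ⟨i, hi⟩ := (hd.eventually (gt_mem_nhds (mul_pos hc (pow_pos hε 2)))).exists
  have hle : N + 1 + φ i ≤ φ (i + (N + 1)) := add_comm (N + 1) i ▸ hφ.add_le_nat (N + 1) i
  set p := φ (i + (N + 1)) - φ i
  have hdp : d i = (T ^ φ i) ((T ^ p) z - z) := by
    rw [map_sub, ← Module.End.mul_apply, ← pow_add, Nat.add_sub_cancel' (by omega)]
  refine ⟨p, by omega, hball ?_⟩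
  rw [hdp, pow_apply_pow hT] at hi
  have hpz : (T ^ p) z - z ∈ U := U.sub_mem (Module.End.pow_apply_mem_of_forall_mem p hTU z hz) hz
  have hsq : ‖(T ^ p) z - z‖ ^ 2 < ε ^ 2 :=
    lt_of_mul_lt_mul_left ((hcB _ hpz).trans_lt hi) hc.le
  rw [Metric.mem_ball, dist_eq_norm]
  exact lt_of_pow_lt_pow_left₀ 2 hε.le hsq

theorem exists_injective_span_tendsto_pow_apply {n : ℕ} (b : Basis (Fin n) ℝ E)
    (hb : ∀ i j, B (b i) (b j) = if i = j then (if (i : ℕ) + 1 = n then -1 else 1) else 0)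
    (hB : B.IsSymm) {T : Module.End ℝ E} (hT : ∀ u v, B (T u) (T v) = B u v) {l : ℝ}
    (hl : 1 < l) {x y : E} (hx : T.HasEigenvector l x) (hy : T.HasEigenvector l⁻¹ y) {z : E}
    (hz : z ≠ 0) (hzx : B z x = 0) (hzy : B z y = 0) :
    ∃ v ≠ 0, ∃ m : ℕ → ℕ, Function.Injective (fun i => ℝ ∙ (T ^ m i) v) ∧
      Tendsto (fun i => (T ^ m i) v) atTop (𝓝 z) := by
  have hl0 : 0 < l := one_pos.trans hl
  have hxx : B x x = 0 := apply_self_eq_zero_of_hasEigenvector hT hx (by nlinarith)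
  have hyy : B y y = 0 := apply_self_eq_zero_of_hasEigenvector hT hy <| by
    rw [← mul_inv]; exact inv_ne_one.mpr (by nlinarith)
  have hxy_indep : LinearIndependent ℝ ![x, y] :=
    Module.End.eigenvectors_linearIndependent' T ![l, l⁻¹]
      (injective_pair_iff_ne.mpr fun h => by nlinarith [mul_inv_cancel₀ hl0.ne']) ![x, y]
      (Fin.forall_fin_two.mpr ⟨hx, hy⟩)
  have hxy : B x y ≠ 0 := apply_ne_zero_of_isotropic b hb hB hxy_indep hxx hyy
  set U : Submodule ℝ E := LinearMap.ker (B.flip x) ⊓ LinearMap.ker (B.flip y)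
  have hmemU (v : E) : v ∈ U ↔ B v x = 0 ∧ B v y = 0 := by simp [U]
  have hTU (v : E) (hv : v ∈ U) : T v ∈ U := by
    rw [hmemU] at hv ⊢
    exact ⟨apply_eq_zero_of_hasEigenvector hT hx hl0.ne' hv.1,
      apply_eq_zero_of_hasEigenvector hT hy (inv_ne_zero hl0.ne') hv.2⟩
  have hUpos (v : E) (hv : v ∈ U) : v ≠ 0 → 0 < B v v :=
    apply_self_pos_of_isOrtho b hb hB hxx hxy ((hmemU v).mp hv).1 ((hmemU v).mp hv).2
  obtain ⟨m, hm, hlim⟩ :=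
    (mapClusterPt_pow_apply_self hT hTU hUpos ((hmemU z).mpr ⟨hzx, hzy⟩)).tendsto_subseq
  have hyx : B (z + y) x ≠ 0 := by rwa [add_left, hzx, zero_add, hB.eq]
  refine ⟨z + y, fun h => hyx (by rw [h, zero_left]), m,
    (injective_span_singleton_pow_apply hT hl hx ?_ hyx).comp hm.injective, ?_⟩
  · have hzz := hUpos z ((hmemU z).mpr ⟨hzx, hzy⟩) hz
    rw [add_left, add_right, add_right, hzy, hB.eq y z, hzy, hyy]
    simpa using hzz.ne'
  · have hdecay : Tendsto (fun i => l⁻¹ ^ m i) atTop (𝓝 0) :=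
      (tendsto_pow_atTop_nhds_zero_of_lt_one (inv_nonneg.mpr hl0.le)
        (inv_lt_one_of_one_lt₀ hl)).comp hm.tendsto_atTop
    simpa [hy.pow_apply] using hlim.add (hdecay.smul_const y)

end Normed

end LinearMap.BilinForm

theorem Projectivization.tendsto_mk {S ι : Type} {l : Filter ι} {v : ι → Vec S} {z : Vec S}
    (hv : ∀ i, v i ≠ 0) (hz : z ≠ 0) (h : Tendsto v l (𝓝 z)) :
    Tendsto (fun i => Projectivization.mk ℝ (v i) (hv i)) l (𝓝 (Projectivization.mk ℝ z hz)) :=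
  (continuous_quotient_mk'.tendsto ⟨z, hz⟩).comp (tendsto_subtype_rng.mpr h)

namespace LorentzianCoxeterSystem

variable (G : LorentzianCoxeterSystem S W)

def bilinForm : LinearMap.BilinForm ℝ (Vec S) := Matrix.toBilin' (Matrix.of G.k)

theorem bilinForm_apply (x y : Vec S) : G.bilinForm x y = Bform G.k x y := by
  rw [bilinForm, Matrix.toBilin'_apply]; rfl

theorem bilinForm_isSymm : G.bilinForm.IsSymm :=
  Matrix.isSymm_toBilin'_iff_isSymm.mpr (Matrix.IsSymm.ext fun s t => G.k_symm t s)

theorem bilinForm_ρ (w : W) (x y : Vec S) :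
    G.bilinForm (G.ρ w x) (G.ρ w y) = G.bilinForm x y := by
  simp only [bilinForm_apply, G.ρ_preserves]

theorem exists_basis_bilinForm : ∃ b : Basis (Fin (Fintype.card S)) ℝ (Vec S), ∀ i j,
    G.bilinForm (b i) (b j) =
      if i = j then (if (i : ℕ) + 1 = Fintype.card S then -1 else 1) else 0 := by
  simpa only [bilinForm_apply] using G.lorentzian

theorem pact_mk (w : W) (v : Vec S) (hv : v ≠ 0) :
    G.pact w (Projectivization.mk ℝ v hv) =
      Projectivization.mk ℝ (G.ρ w v) ((G.ρ w).map_ne_zero_iff.mpr hv) :=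
  Projectivization.map_mk _ _ _ _

theorem mem_limitDirections_of_tendsto {v z : Vec S} (hv : v ≠ 0) (hz : z ≠ 0) {g : ℕ → W}
    (hinj : Function.Injective fun i => ℝ ∙ G.ρ (g i) v)
    (hlim : Tendsto (fun i => G.ρ (g i) v) atTop (𝓝 z)) :
    Projectivization.mk ℝ z hz ∈ G.limitDirections := by
  refine ⟨Projectivization.mk ℝ v hv, g, fun i j hij => hinj ?_, ?_⟩
  · simpa only [pact_mk, Projectivization.submodule_mk] using
      congrArg Projectivization.submodule hij
  · simpa only [pact_mk] using Projectivization.tendsto_mk _ hz hlim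

end LorentzianCoxeterSystem

/-- For a hyperbolic element `w` with eigenvectors `x, y` for eigenvalues `λ > 1` and `λ⁻¹`,
every nonzero `z` orthogonal to `x` and `y` gives a limit direction. -/
theorem hyperbolic_unimodular_eigendirection_isLimitDirection (G : LorentzianCoxeterSystem S W)
    (w : W) (l : ℝ) (hl : 1 < l) (x y : Vec S) (hx : x ≠ 0) (hy : y ≠ 0)
    (heigx : G.ρ w x = l • x) (heigy : G.ρ w y = l⁻¹ • y)
    (z : Vec S) (hz : z ≠ 0) (hzx : Bform G.k z x = 0) (hzy : Bform G.k z y = 0) :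
    Projectivization.mk ℝ z hz ∈ G.limitDirections := by
  obtain ⟨b, hb⟩ := G.exists_basis_bilinForm
  set T : Module.End ℝ (Vec S) := (G.ρ w).toLinearMap
  have hρ_pow (n : ℕ) : ⇑(G.ρ (w ^ n)) = ⇑(T ^ n) := by
    rw [map_pow, LinearEquiv.coe_pow, Module.End.coe_pow]; rfl
  obtain ⟨v, hv, m, hinj, hlim⟩ :=
    LinearMap.BilinForm.exists_injective_span_tendsto_pow_apply b hb G.bilinForm_isSymm
      (G.bilinForm_ρ w) hl
      (Module.End.hasEigenvector_iff.mpr ⟨Module.End.mem_eigenspace_iff.mpr heigx, hx⟩)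
      (Module.End.hasEigenvector_iff.mpr ⟨Module.End.mem_eigenspace_iff.mpr heigy, hy⟩) hz
      (by rwa [bilinForm_apply]) (by rwa [bilinForm_apply])
  exact G.mem_limitDirections_of_tendsto hv hz (g := fun i => w ^ m i)
    (by simpa only [hρ_pow] using hinj) (by simpa only [hρ_pow] using hlim)
end
end
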